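/- arXiv:2508.11720 — 2 statements merged into one kernel-verified Lean document; each statement's English description precedes it below -/
import Mathlib

section
/- The two explicit formulas for the new type degenerate Simsek numbers agree: for all natural numbers n, k and real (or rational function field) parameters α, λ, (1/k!) Σ_{ℓ=0}^{k} Σ_{j=0}^{ℓ} C(ℓ,j) α^{k-ℓ} s(k,ℓ) λ^j j^n = (1/k!) Σ_{ℓ=0}^{k} Σ_{j=0}^{ℓ} C(k,ℓ) α^{ℓ-j} λ^j j^n (1)_{k-ℓ,α} s(ℓ,j), where s(n,k) are the (signed) Stirling numbers of the first kind and (1)_{m,α} = ∏_{i=0}^{m-1}(1 - iα). -/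
open Finset

/-- The degenerate falling factorial `(x)_{n,α} = ∏_{i=0}^{n-1} (x - i·α)`. -/
def degFall {R : Type*} [CommRing R] (α x : R) (n : ℕ) : R :=
  ∏ i ∈ Finset.range n, (x - (i : R) * α)

/-- The ordinary falling factorial `(x)_n = x(x-1)⋯(x-n+1)`. -/
def fall {R : Type*} [CommRing R] (x : R) (n : ℕ) : R :=
  ∏ i ∈ Finset.range n, (x - (i : R))

/-- Signed Stirling numbers of the first kind, via the standard recurrence. -/
def stirling1 : ℕ → ℕ → ℤ
  | 0, 0 => 1
  | 0, _ + 1 => 0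
  | n + 1, 0 => -(n : ℤ) * stirling1 n 0
  | n + 1, k + 1 => stirling1 n k - (n : ℤ) * stirling1 n (k + 1)

/-- The Simsek numbers `y₁(n,k;λ) = (1/k!) Σ_{j=0}^{k} C(k,j) jⁿ λʲ`. -/
noncomputable def simsek {F : Type*} [Field F] (lam : F) (n k : ℕ) : F :=
  (k.factorial : F)⁻¹ * ∑ j ∈ Finset.range (k + 1),
    (k.choose j : F) * (j : F) ^ n * lam ^ j

/-- The new type degenerate Simsek numbers
`y*₁,α(n,k;λ) = (1/k!) Σ_{ℓ=0}^{k} Σ_{j=0}^{ℓ} C(ℓ,j) α^{k-ℓ} s(k,ℓ) λʲ jⁿ`. -/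
noncomputable def ystar {F : Type*} [Field F] (α lam : F) (n k : ℕ) : F :=
  (k.factorial : F)⁻¹ * ∑ ℓ ∈ Finset.range (k + 1), ∑ j ∈ Finset.range (ℓ + 1),
    (ℓ.choose j : F) * α ^ (k - ℓ) * ((stirling1 k ℓ : ℤ) : F) * lam ^ j * (j : F) ^ n


open Polynomial

lemma stirling1_eq_zero : ∀ n k : ℕ, n < k → stirling1 n k = 0 := by
  intro n
  induction n with
  | zero => intro k hk; match k, hk with
    | k + 1, _ => rfl
  | succ n ih =>
    intro k hk
    match k, hk with
    | k + 1, hk =>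
      show stirling1 n k - (n : ℤ) * stirling1 n (k + 1) = 0
      rw [ih k (by omega), ih (k+1) (by omega)]; ring

lemma degFall_succ {R : Type*} [CommRing R] (α x : R) (n : ℕ) :
    degFall α x (n + 1) = degFall α x n * (x - (n : R) * α) := by
  simp [degFall, Finset.prod_range_succ]

lemma degFall_expand {R : Type*} [CommRing R] (α x : R) (k : ℕ) :
    degFall α x k = ∑ ℓ ∈ range (k + 1),
      ((stirling1 k ℓ : ℤ) : R) * α ^ (k - ℓ) * x ^ ℓ := by
  induction k with
  | zero => simp [degFall, stirling1]
  | succ k ih =>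
    rw [degFall_succ, ih]
    rw [Finset.sum_range_succ' (fun ℓ => ((stirling1 (k+1) ℓ : ℤ) : R) * α ^ (k + 1 - ℓ) * x ^ ℓ)]
    have h0 : ((stirling1 (k+1) 0 : ℤ) : R) = -(k : R) * ((stirling1 k 0 : ℤ) : R) := by
      show ((-(k:ℤ) * stirling1 k 0 : ℤ) : R) = _
      push_cast; ring
    have h1 : ∀ j, ((stirling1 (k+1) (j+1) : ℤ) : R)
        = ((stirling1 k j : ℤ) : R) - (k : R) * ((stirling1 k (j+1) : ℤ) : R) := by
      intro j
      show ((stirling1 k j - (k:ℤ) * stirling1 k (j+1) : ℤ) : R) = _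
      push_cast; ring
    simp only [h0, h1]
    rw [mul_sub, Finset.sum_mul, Finset.sum_mul]
    have key : ∀ j ∈ range (k + 1),
        (((stirling1 k j : ℤ) : R) - (k : R) * ((stirling1 k (j+1) : ℤ) : R)) * α ^ (k + 1 - (j+1)) * x ^ (j+1)
        = ((stirling1 k j : ℤ) : R) * α ^ (k - j) * x ^ j * x
          - (k : R) * (((stirling1 k (j+1) : ℤ) : R) * α ^ (k - (j+1)) * x ^ (j+1) * α) := by
      intro j hj
      simp only [mem_range] at hj
      have e : k + 1 - (j + 1) = k - j := by omega
      rw [e]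
      rcases Nat.lt_or_ge j k with h | h
      · have e2 : k - j = (k - (j+1)) + 1 := by omega
        rw [e2, pow_succ]; ring
      · rw [stirling1_eq_zero k (j+1) (by omega)]
        push_cast; ring
    rw [Finset.sum_congr rfl key, Finset.sum_sub_distrib]
    have hsplit : ∑ j ∈ range (k+1), (k:R) * (((stirling1 k (j+1) : ℤ) : R) * α ^ (k - (j+1)) * x ^ (j+1) * α)
        = (∑ j ∈ range (k+1), ((stirling1 k j : ℤ) : R) * α ^ (k - j) * x ^ j * ((k:R)*α))
          - ((stirling1 k 0 : ℤ) : R) * α ^ k * ((k:R)*α) := by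
      rw [Finset.sum_range_succ
        (fun j => (k:R) * (((stirling1 k (j+1) : ℤ) : R) * α ^ (k - (j+1)) * x ^ (j+1) * α)),
        Finset.sum_range_succ' (fun j => ((stirling1 k j : ℤ) : R) * α ^ (k - j) * x ^ j * ((k:R)*α))]
      rw [stirling1_eq_zero k (k+1) (by omega)]
      simp only [Nat.sub_zero, pow_zero, mul_one, Int.cast_zero]
      rw [add_sub_cancel_right]
      simp only [zero_mul, mul_zero, add_zero]
      apply Finset.sum_congr rfl
      intro j hj; ring
    rw [hsplit]
    simp only [Nat.sub_zero, pow_zero, mul_one]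
    ring

lemma degFall_add {R : Type*} [CommRing R] (α x y : R) (k : ℕ) :
    degFall α (x + y) k = ∑ ℓ ∈ range (k + 1),
      (k.choose ℓ : R) * degFall α x ℓ * degFall α y (k - ℓ) := by
  induction k with
  | zero => simp [degFall]
  | succ k ih =>
    rw [degFall_succ, ih, Finset.sum_mul]
    have key : ∀ ℓ ∈ range (k + 1),
        (k.choose ℓ : R) * degFall α x ℓ * degFall α y (k - ℓ) * (x + y - (k : R) * α)
        = (k.choose ℓ : R) * degFall α x (ℓ+1) * degFall α y (k - ℓ)
          + (k.choose ℓ : R) * degFall α x ℓ * degFall α y (k + 1 - ℓ) := by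
      intro ℓ hℓ
      simp only [mem_range] at hℓ
      have e1 : k + 1 - ℓ = (k - ℓ) + 1 := by omega
      rw [e1, degFall_succ, degFall_succ]
      have e2 : ((k - ℓ : ℕ) : R) = (k : R) - (ℓ : R) := by
        have := Nat.cast_sub (R := R) (by omega : ℓ ≤ k); exact this
      rw [e2]; ring
    rw [Finset.sum_congr rfl key, Finset.sum_add_distrib]
    -- target: ∑ ℓ ∈ range (k+2), C(k+1,ℓ) Fx ℓ Fy (k+1-ℓ)
    rw [Finset.sum_range_succ' (fun ℓ => ((k+1).choose ℓ : R) * degFall α x ℓ * degFall α y (k + 1 - ℓ))]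
    have hch : ∀ j, (((k+1).choose (j+1) : ℕ) : R) = (k.choose j : R) + (k.choose (j+1) : R) := by
      intro j; rw [Nat.choose_succ_succ]; push_cast; ring
    simp only [hch, Nat.choose_zero_right]
    have key2 : ∀ j ∈ range (k+1),
        ((k.choose j : R) + (k.choose (j+1) : R)) * degFall α x (j+1) * degFall α y (k + 1 - (j+1))
        = (k.choose j : R) * degFall α x (j+1) * degFall α y (k - j)
          + (k.choose (j+1) : R) * degFall α x (j+1) * degFall α y (k + 1 - (j+1)) := by
      intro j hj
      have e : k + 1 - (j+1) = k - j := by omega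
      rw [e]; ring
    rw [Finset.sum_congr rfl key2, Finset.sum_add_distrib]
    -- second-sum extension: range(k+1) term at top is choose k (k+1) = 0
    rw [Finset.sum_range_succ
      (fun j => (k.choose (j+1) : R) * degFall α x (j+1) * degFall α y (k + 1 - (j+1)))]
    simp only [Nat.choose_succ_self, Nat.cast_zero, zero_mul, add_zero, Nat.sub_zero]
    have e0 : ∑ j ∈ range (k+1), (k.choose j : R) * degFall α x j * degFall α y (k + 1 - j)
        = ∑ j ∈ range k, (k.choose (j+1) : R) * degFall α x (j+1) * degFall α y (k + 1 - (j+1))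
          + (k.choose 0 : R) * degFall α x 0 * degFall α y (k+1) := by
      rw [Finset.sum_range_succ'
        (fun j => (k.choose j : R) * degFall α x j * degFall α y (k + 1 - j))]
      norm_num
    rw [e0]
    simp only [Nat.choose_zero_right, Nat.cast_one, one_mul]
    have e1 : degFall α x 0 = 1 := by simp [degFall]
    rw [e1, one_mul]
    ring

lemma degFall_C {F : Type*} [CommRing F] (α c : F) (m : ℕ) :
    degFall (C α) (C c) m = C (degFall α c m) := by
  simp only [degFall, map_prod]
  apply Finset.prod_congr rfl
  intro i _
  simp

lemma coeffX {F : Type*} [Field F] (α : F) (ℓ j : ℕ) :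
    (degFall (C α) (X : F[X]) ℓ).coeff j = ((stirling1 ℓ j : ℤ) : F) * α ^ (ℓ - j) := by
  rw [degFall_expand]
  have h : ∀ i, ((stirling1 ℓ i : ℤ) : F[X]) * (C α) ^ (ℓ - i) * X ^ i
      = C (((stirling1 ℓ i : ℤ) : F) * α ^ (ℓ - i)) * X ^ i := by
    intro i
    rw [C_mul, C_pow, C_eq_intCast]
  simp only [h, finset_sum_coeff, coeff_C_mul, coeff_X_pow, mul_ite, mul_one, mul_zero,
    Finset.sum_ite_eq' (range (ℓ+1)), mem_range]
  by_cases hj : j < ℓ + 1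
  · simp [hj]
  · simp [hj, stirling1_eq_zero ℓ j (by omega)]

lemma coeff1 {F : Type*} [Field F] (α : F) (k j : ℕ) :
    (degFall (C α) ((X : F[X]) + 1) k).coeff j
      = ∑ ℓ ∈ range (k + 1), (ℓ.choose j : F) * α ^ (k - ℓ) * ((stirling1 k ℓ : ℤ) : F) := by
  rw [degFall_expand]
  have h : ∀ ℓ, ((stirling1 k ℓ : ℤ) : F[X]) * (C α) ^ (k - ℓ) * ((X : F[X]) + 1) ^ ℓ
      = C (((stirling1 k ℓ : ℤ) : F) * α ^ (k - ℓ)) * ((X : F[X]) + 1) ^ ℓ := by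
    intro ℓ; rw [C_mul, C_pow, C_eq_intCast]
  simp only [h, finset_sum_coeff, coeff_C_mul, coeff_X_add_one_pow]
  apply Finset.sum_congr rfl
  intro ℓ _; ring

lemma coeff2 {F : Type*} [Field F] (α : F) (k j : ℕ) :
    (degFall (C α) ((X : F[X]) + 1) k).coeff j
      = ∑ ℓ ∈ range (k + 1),
          (k.choose ℓ : F) * degFall α 1 (k - ℓ) * ((stirling1 ℓ j : ℤ) : F) * α ^ (ℓ - j) := by
  rw [degFall_add]
  have h : ∀ ℓ, ((k.choose ℓ : ℕ) : F[X]) * degFall (C α) X ℓ * degFall (C α) 1 (k - ℓ)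
      = C ((k.choose ℓ : F)) * degFall (C α) X ℓ * C (degFall α 1 (k - ℓ)) := by
    intro ℓ
    rw [← degFall_C α 1 (k - ℓ), map_one, C_eq_natCast]
  simp only [h, finset_sum_coeff]
  apply Finset.sum_congr rfl
  intro ℓ _
  rw [mul_comm (C (k.choose ℓ : F) * degFall (C α) X ℓ) (C (degFall α 1 (k-ℓ))),
    coeff_C_mul, coeff_C_mul, coeffX]
  ring

/-- the two explicit formulas for the new type degenerate Simsek
numbers agree. -/
theorem ystar_explicit_formulas_agree (F : Type*) [Field F] [CharZero F]
    (α lam : F) (n k : ℕ) :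
    (k.factorial : F)⁻¹ * ∑ ℓ ∈ Finset.range (k + 1), ∑ j ∈ Finset.range (ℓ + 1),
        (ℓ.choose j : F) * α ^ (k - ℓ) * ((stirling1 k ℓ : ℤ) : F) * lam ^ j * (j : F) ^ n =
    (k.factorial : F)⁻¹ * ∑ ℓ ∈ Finset.range (k + 1), ∑ j ∈ Finset.range (ℓ + 1),
        (k.choose ℓ : F) * α ^ (ℓ - j) * lam ^ j * (j : F) ^ n *
          degFall α 1 (k - ℓ) * ((stirling1 ℓ j : ℤ) : F) := by
  congr 1
  -- extend inner sums to range (k+1)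
  have hL : ∀ ℓ ∈ range (k + 1),
      (∑ j ∈ range (ℓ + 1),
        (ℓ.choose j : F) * α ^ (k - ℓ) * ((stirling1 k ℓ : ℤ) : F) * lam ^ j * (j : F) ^ n)
      = ∑ j ∈ range (k + 1),
        (ℓ.choose j : F) * α ^ (k - ℓ) * ((stirling1 k ℓ : ℤ) : F) * lam ^ j * (j : F) ^ n := by
    intro ℓ hℓ
    simp only [mem_range] at hℓ
    apply Finset.sum_subset
    · exact Finset.range_subset_range.2 (by omega)
    · intro j hj hj2
      simp only [mem_range] at hj hj2
      rw [Nat.choose_eq_zero_of_lt (by omega)]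
      push_cast; ring
  have hR : ∀ ℓ ∈ range (k + 1),
      (∑ j ∈ range (ℓ + 1),
        (k.choose ℓ : F) * α ^ (ℓ - j) * lam ^ j * (j : F) ^ n *
          degFall α 1 (k - ℓ) * ((stirling1 ℓ j : ℤ) : F))
      = ∑ j ∈ range (k + 1),
        (k.choose ℓ : F) * α ^ (ℓ - j) * lam ^ j * (j : F) ^ n *
          degFall α 1 (k - ℓ) * ((stirling1 ℓ j : ℤ) : F) := by
    intro ℓ hℓ
    simp only [mem_range] at hℓ
    apply Finset.sum_subset
    · exact Finset.range_subset_range.2 (by omega)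
    · intro j hj hj2
      simp only [mem_range] at hj hj2
      rw [stirling1_eq_zero ℓ j (by omega)]
      push_cast; ring
  rw [Finset.sum_congr rfl hL, Finset.sum_congr rfl hR]
  rw [Finset.sum_comm]
  conv_rhs => rw [Finset.sum_comm]
  apply Finset.sum_congr rfl
  intro j _
  have e1 : ∑ ℓ ∈ range (k + 1),
      (ℓ.choose j : F) * α ^ (k - ℓ) * ((stirling1 k ℓ : ℤ) : F) * lam ^ j * (j : F) ^ n
      = (∑ ℓ ∈ range (k + 1),
          (ℓ.choose j : F) * α ^ (k - ℓ) * ((stirling1 k ℓ : ℤ) : F)) * (lam ^ j * (j : F) ^ n) := by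
    rw [Finset.sum_mul]
    apply Finset.sum_congr rfl
    intro ℓ _; ring
  have e2 : ∑ ℓ ∈ range (k + 1),
      (k.choose ℓ : F) * α ^ (ℓ - j) * lam ^ j * (j : F) ^ n *
        degFall α 1 (k - ℓ) * ((stirling1 ℓ j : ℤ) : F)
      = (∑ ℓ ∈ range (k + 1),
          (k.choose ℓ : F) * degFall α 1 (k - ℓ) * ((stirling1 ℓ j : ℤ) : F) * α ^ (ℓ - j))
          * (lam ^ j * (j : F) ^ n) := by
    rw [Finset.sum_mul]
    apply Finset.sum_congr rfl
    intro ℓ _; ring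
  rw [e1, e2, ← coeff1 α k j, ← coeff2 α k j]
end

section
/- For all n ≥ 0, k ≥ 1, and parameters α ≠ 0 and λ in a field of characteristic zero: y*_{1,α}(n,k;λ) = (1/k!) Σ_{j=1}^{k} α^{k-j} C(k,j) (j/k) B_{k-j}^{(k)} Σ_{ℓ=0}^{j} C(j,ℓ) λ^ℓ ℓ^n, where B_m^{(k)} are the Bernoulli numbers of order k. -/
open Finset

/-- Bernoulli numbers of order `k`, defined by the egf `(t/(eᵗ-1))ᵏ = Σ_m B_m^{(k)} tᵐ/m!`. -/
noncomputable def bernoulliHigh (k m : ℕ) : ℚ :=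
  (m.factorial : ℚ) *
    PowerSeries.coeff m ((PowerSeries.mk fun n => bernoulli n / n.factorial) ^ k)

section Aux
open PowerSeries

lemma stirling1_succ_succ (n k : ℕ) :
    stirling1 (n + 1) (k + 1) = stirling1 n k - (n : ℤ) * stirling1 n (k + 1) := rfl

lemma stirling1_eq_zero_of_lt : ∀ {n k : ℕ}, n < k → stirling1 n k = 0
  | 0, _ + 1, _ => rfl
  | n + 1, k + 1, h => by
    rw [stirling1_succ_succ, stirling1_eq_zero_of_lt (by omega),
      stirling1_eq_zero_of_lt (by omega)]
    ring

lemma stirling1_self : ∀ n : ℕ, stirling1 n n = 1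
  | 0 => rfl
  | n + 1 => by
    rw [stirling1_succ_succ, stirling1_self n, stirling1_eq_zero_of_lt (by omega)]
    ring

lemma stirling1_zero_eq_zero : ∀ {n : ℕ}, 1 ≤ n → stirling1 n 0 = 0
  | 1, _ => by show -(0:ℤ) * stirling1 0 0 = 0; ring
  | n + 2, _ => by
    show -((n+1 : ℕ) : ℤ) * stirling1 (n+1) 0 = 0
    rw [stirling1_zero_eq_zero (by omega)]; ring

noncomputable def Bq : PowerSeries ℚ := bernoulliPowerSeries ℚ

lemma derivative_exp : d⁄dX ℚ (exp ℚ) = exp ℚ := by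
  ext n
  rw [PowerSeries.coeff_derivative, coeff_exp, coeff_exp]
  simp only [Algebra.algebraMap_self, RingHom.id_apply, Nat.factorial_succ]
  push_cast
  have h1 : ((n:ℚ) + 1) ≠ 0 := by positivity
  have h2 : ((n.factorial : ℚ)) ≠ 0 := by exact_mod_cast n.factorial_ne_zero
  field_simp

lemma key : X * d⁄dX ℚ Bq = Bq - Bq ^ 2 - X * Bq := by
  have h : Bq * (exp ℚ - 1) = X := bernoulliPowerSeries_mul_exp_sub_one ℚ
  have hd := congrArg (d⁄dX ℚ) h
  rw [Derivation.leibniz, map_sub, _root_.derivative_exp, Derivation.map_one_eq_zero, sub_zero,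
    PowerSeries.derivative_X, smul_eq_mul, smul_eq_mul] at hd
  linear_combination Bq * hd - (d⁄dX ℚ Bq + Bq) * h

lemma rec1 (k m : ℕ) :
    ((m : ℚ) + 1) * coeff (m+1) (Bq ^ (k+1)) =
      ((k : ℚ) + 1) * (coeff (m+1) (Bq ^ (k+1)) - coeff (m+1) (Bq ^ (k+2))
        - coeff m (Bq ^ (k+1))) := by
  have h1 : X * d⁄dX ℚ (Bq ^ (k+1)) =
      (k+1) • (Bq ^ (k+1) - Bq ^ (k+2) - X * Bq ^ (k+1)) := by
    rw [Derivation.leibniz_pow, smul_eq_mul, mul_smul_comm]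
    congr 1
    rw [show X * (Bq ^ (k+1-1) * d⁄dX ℚ Bq) = Bq ^ k * (X * d⁄dX ℚ Bq) by
      rw [Nat.add_sub_cancel]; ring, key]
    ring
  have h2 := congrArg (coeff (m+1)) h1
  rw [coeff_succ_X_mul, PowerSeries.coeff_derivative, map_nsmul, nsmul_eq_mul,
    map_sub, map_sub, coeff_succ_X_mul] at h2
  push_cast at h2
  linear_combination h2

lemma constCoeff_Bq_pow (r : ℕ) : coeff 0 (Bq ^ r) = 1 := by
  rw [coeff_zero_eq_constantCoeff, map_pow]
  have : constantCoeff Bq = 1 := by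
    simp [Bq, bernoulliPowerSeries, ← coeff_zero_eq_constantCoeff]
  rw [this, one_pow]

lemma main : ∀ K : ℕ, ∀ J ≤ K,
    (K.factorial : ℚ) * coeff (K - J) (Bq ^ (K+1)) =
      (J.factorial : ℚ) * ((stirling1 (K+1) (J+1) : ℤ) : ℚ) := by
  intro K
  induction K with
  | zero =>
    intro J hJ
    interval_cases J
    rw [Nat.sub_self, constCoeff_Bq_pow, stirling1_self]
    norm_num
  | succ K ih =>
    intro J hJ
    rcases eq_or_lt_of_le hJ with hEq | hlt
    · subst hEq
      rw [Nat.sub_self, constCoeff_Bq_pow, stirling1_self]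
      ring
    · have hJK : J ≤ K := by omega
      rcases J with _ | J'
      · -- J = 0
        have hrec := rec1 K K
        have hih := ih 0 (Nat.zero_le K)
        rw [Nat.sub_zero] at hih ⊢
        rw [show stirling1 (K+1+1) (0+1) = stirling1 (K+1) 0 - ((K:ℤ)+1) * stirling1 (K+1) 1 by
          rw [stirling1_succ_succ]; push_cast; ring,
          stirling1_zero_eq_zero (by omega)]
        push_cast [Nat.factorial_succ] at hrec hih ⊢
        linear_combination (K.factorial : ℚ) * hrec - ((K:ℚ)+1) * hih
      · -- J = J' + 1
        have hJ'K : J' + 1 ≤ K := hJK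
        have hrec := rec1 K (K - (J'+1))
        rw [show K - (J'+1) + 1 = K - J' by omega] at hrec
        rw [Nat.cast_sub hJ'K] at hrec
        have h1 := ih J' (by omega)
        have h2 := ih (J'+1) hJ'K
        rw [show K + 1 - (J'+1) = K - J' by omega]
        rw [show stirling1 (K+1+1) (J'+1+1) =
            stirling1 (K+1) (J'+1) - ((K:ℤ)+1) * stirling1 (K+1) (J'+1+1) by
          rw [stirling1_succ_succ]; push_cast; ring]
        push_cast [Nat.factorial_succ] at hrec h1 h2 ⊢
        linear_combination (K.factorial : ℚ) * hrec + ((J':ℚ)+1) * h1 - ((K:ℚ)+1) * h2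

lemma mkB_eq : (PowerSeries.mk fun n => bernoulli n / (n.factorial : ℚ)) = Bq := by
  ext n
  simp [Bq, bernoulliPowerSeries]

lemma scalarQ (K J : ℕ) (hJK : J ≤ K) :
    ((stirling1 (K+1) (J+1) : ℤ) : ℚ) =
      ((K+1).choose (J+1) : ℚ) * (((J:ℚ)+1) / ((K:ℚ)+1)) * bernoulliHigh (K+1) (K-J) := by
  have hm := main K J hJK
  unfold bernoulliHigh
  rw [mkB_eq]
  have hch : ((K+1).choose (J+1)) * ((J+1).factorial) * ((K-J).factorial)
      = (K+1).factorial := by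
    have h := Nat.choose_mul_factorial_mul_factorial (show J+1 ≤ K+1 by omega)
    rwa [show K+1-(J+1) = K-J by omega] at h
  have hchQ : (((K+1).choose (J+1) : ℕ) : ℚ) * (((J+1).factorial : ℕ) : ℚ) *
      (((K-J).factorial : ℕ) : ℚ) = (((K+1).factorial : ℕ) : ℚ) := by exact_mod_cast hch
  have hK1 : ((K:ℚ)+1) ≠ 0 := by positivity
  have hKf : ((K.factorial : ℕ) : ℚ) ≠ 0 := Nat.cast_ne_zero.mpr K.factorial_ne_zero
  push_cast [Nat.factorial_succ] at hchQ hm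
  have h3 : (K.factorial : ℚ) * ( ((K:ℚ)+1) * ((stirling1 (K+1) (J+1) : ℤ) : ℚ)
      - ((K+1).choose (J+1) : ℚ) * ((J:ℚ)+1) * ((K-J).factorial : ℚ)
        * coeff (K-J) (Bq ^ (K+1)) ) = 0 := by
    linear_combination (-( ((K+1).choose (J+1) : ℚ) * ((J:ℚ)+1) * ((K-J).factorial : ℚ))) * hm
      - ((stirling1 (K+1) (J+1) : ℤ) : ℚ) * hchQ
  have h4 := (mul_eq_zero.mp h3).resolve_left hKf
  field_simp
  linear_combination h4

lemma scalarF {F : Type*} [Field F] [CharZero F] (K J : ℕ) (hJK : J ≤ K) :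
    ((stirling1 (K+1) (J+1) : ℤ) : F) =
      ((K+1).choose (J+1) : F) * (((J+1 : ℕ) : F) / (((K+1 : ℕ)) : F)) *
        ((bernoulliHigh (K+1) (K-J) : ℚ) : F) := by
  have h := congrArg (fun q : ℚ => (q : F)) (scalarQ K J hJK)
  push_cast at h ⊢
  convert h using 2


end Aux

/-- expression of the new type degenerate Simsek numbers through
Bernoulli numbers of order `k`. -/
theorem ystar_eq_sum_bernoulliHigh (F : Type*) [Field F] [CharZero F]
    (α lam : F) (hα : α ≠ 0) (n k : ℕ) (hk : 1 ≤ k) :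
    ystar α lam n k =
      (k.factorial : F)⁻¹ * ∑ j ∈ Finset.Icc 1 k,
        α ^ (k - j) * (k.choose j : F) * ((j : F) / (k : F)) *
          ((bernoulliHigh k (k - j) : ℚ) : F) *
          ∑ ℓ ∈ Finset.range (j + 1), (j.choose ℓ : F) * lam ^ ℓ * (ℓ : F) ^ n := by
  obtain ⟨K, rfl⟩ : ∃ K, k = K + 1 := ⟨k - 1, by omega⟩
  unfold ystar
  congr 1
  have hsub : Finset.Icc 1 (K+1) ⊆ Finset.range (K+2) := by
    intro x hx
    simp only [Finset.mem_Icc] at hx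
    simp only [Finset.mem_range]
    omega
  have hzero : ∀ x ∈ Finset.range (K+2), x ∉ Finset.Icc 1 (K+1) →
      (∑ j ∈ Finset.range (x + 1),
        (x.choose j : F) * α ^ (K+1 - x) * ((stirling1 (K+1) x : ℤ) : F) * lam ^ j * (j : F) ^ n)
        = 0 := by
    intro x hx hx'
    have hx0 : x = 0 := by
      simp only [Finset.mem_range] at hx
      simp only [Finset.mem_Icc] at hx'
      omega
    subst hx0
    simp [stirling1_zero_eq_zero (show 1 ≤ K+1 by omega)]
  rw [← Finset.sum_subset hsub hzero]
  refine Finset.sum_congr rfl ?_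
  intro ℓ hℓ
  simp only [Finset.mem_Icc] at hℓ
  obtain ⟨J, rfl⟩ : ∃ J, ℓ = J + 1 := ⟨ℓ - 1, by omega⟩
  have hJK : J ≤ K := by omega
  have hcast := scalarF (F := F) K J hJK
  have hidx : K + 1 - (J + 1) = K - J := by omega
  rw [hidx]
  calc ∑ j ∈ Finset.range (J + 1 + 1),
      ((J+1).choose j : F) * α ^ (K - J) * ((stirling1 (K+1) (J+1) : ℤ) : F) * lam ^ j * (j : F) ^ n
      = (α ^ (K - J) * ((stirling1 (K+1) (J+1) : ℤ) : F)) *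
        ∑ j ∈ Finset.range (J + 1 + 1), ((J+1).choose j : F) * lam ^ j * (j : F) ^ n := by
        rw [Finset.mul_sum]
        exact Finset.sum_congr rfl fun j _ => by ring
    _ = _ := by
        rw [hcast]
        push_cast
        ring
end
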